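/- arXiv:1802.05358 — 2 statements merged into one kernel-verified Lean document; each statement's English description precedes it below -/
import Mathlib

section
/- The polynomial ring ℤ[x₁,…,xₙ] is a free module of rank n! over the subring Λₙ = ℤ[x₁,…,xₙ]^{Sₙ} of symmetric polynomials. -/
open MvPolynomial Polynomial Finset
namespace Stmt5
variable {n : ℕ}

variable {n : ℕ}

def SymT (n k : ℕ) (p : MvPolynomial (Fin n) ℤ) : Prop :=
  ∀ σ : Equiv.Perm (Fin n), (∀ i : Fin n, k ≤ (i : ℕ) → σ i = i) → rename σ p = p

lemma SymT.mul {k : ℕ} {p q : MvPolynomial (Fin n) ℤ} (hp : SymT n k p) (hq : SymT n k q) :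
    SymT n k (p * q) := by
  intro σ hσ; rw [map_mul, hp σ hσ, hq σ hσ]

lemma SymT.add {k : ℕ} {p q : MvPolynomial (Fin n) ℤ} (hp : SymT n k p) (hq : SymT n k q) :
    SymT n k (p + q) := by
  intro σ hσ; rw [map_add, hp σ hσ, hq σ hσ]

lemma SymT.neg {k : ℕ} {p : MvPolynomial (Fin n) ℤ} (hp : SymT n k p) : SymT n k (-p) := by
  intro σ hσ; rw [map_neg, hp σ hσ]

lemma SymT.zero {k : ℕ} : SymT n k (0 : MvPolynomial (Fin n) ℤ) := fun σ _ => map_zero _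

lemma SymT.sum {k : ℕ} {ι : Type*} {s : Finset ι} {f : ι → MvPolynomial (Fin n) ℤ}
    (h : ∀ i ∈ s, SymT n k (f i)) : SymT n k (∑ i ∈ s, f i) := by
  intro σ hσ
  rw [map_sum]
  exact Finset.sum_congr rfl fun i hi => h i hi σ hσ

lemma SymT.mono {k l : ℕ} (hkl : k ≤ l) {p : MvPolynomial (Fin n) ℤ} (h : SymT n l p) :
    SymT n k p :=
  fun σ hσ => h σ (fun i hi => hσ i (hkl.trans hi))

lemma sym_zero' (p : MvPolynomial (Fin n) ℤ) : SymT n 0 p := by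
  intro σ hσ
  have : σ = Equiv.refl _ := Equiv.ext fun i => hσ i (Nat.zero_le _)
  simp [this]

lemma sym_X {k : ℕ} {i : Fin n} (hi : k ≤ (i : ℕ)) : SymT n k (MvPolynomial.X i) := by
  intro σ hσ; rw [rename_X, hσ i hi]

/-- the module of polynomials in `x_k` with `Λ_{k+1}` coefficients (no degree bound) -/
def InM {k : ℕ} (hk : k + 1 ≤ n) (p : MvPolynomial (Fin n) ℤ) : Prop :=
  ∃ q : Polynomial (MvPolynomial (Fin n) ℤ),
    (∀ j, SymT n (k + 1) (q.coeff j)) ∧ p = q.eval (-(MvPolynomial.X ⟨k, hk⟩))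

lemma InM.add {k : ℕ} {hk : k + 1 ≤ n} {p p' : MvPolynomial (Fin n) ℤ}
    (h : InM hk p) (h' : InM hk p') : InM hk (p + p') := by
  obtain ⟨q, hq, rfl⟩ := h
  obtain ⟨q', hq', rfl⟩ := h'
  exact ⟨q + q', fun j => by rw [Polynomial.coeff_add]; exact (hq j).add (hq' j),
    (Polynomial.eval_add).symm⟩

lemma InM.neg {k : ℕ} {hk : k + 1 ≤ n} {p : MvPolynomial (Fin n) ℤ}
    (h : InM hk p) : InM hk (-p) := by
  obtain ⟨q, hq, rfl⟩ := h
  exact ⟨-q, fun j => by rw [Polynomial.coeff_neg]; exact (hq j).neg, (Polynomial.eval_neg _ _).symm⟩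

lemma InM.sub {k : ℕ} {hk : k + 1 ≤ n} {p p' : MvPolynomial (Fin n) ℤ}
    (h : InM hk p) (h' : InM hk p') : InM hk (p - p') := by
  rw [sub_eq_add_neg]; exact h.add h'.neg

lemma InM.mul {k : ℕ} {hk : k + 1 ≤ n} {p p' : MvPolynomial (Fin n) ℤ}
    (h : InM hk p) (h' : InM hk p') : InM hk (p * p') := by
  obtain ⟨q, hq, rfl⟩ := h
  obtain ⟨q', hq', rfl⟩ := h'
  refine ⟨q * q', fun j => ?_, (Polynomial.eval_mul).symm⟩
  rw [Polynomial.coeff_mul]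
  exact SymT.sum fun x _ => (hq x.1).mul (hq' x.2)

lemma InM.ofSym {k : ℕ} {hk : k + 1 ≤ n} {p : MvPolynomial (Fin n) ℤ}
    (h : SymT n (k + 1) p) : InM hk p := by
  refine ⟨Polynomial.C p, fun j => ?_, by simp⟩
  rw [Polynomial.coeff_C]
  split <;> [exact h; exact SymT.zero]

lemma InM.zero {k : ℕ} {hk : k + 1 ≤ n} : InM hk (0 : MvPolynomial (Fin n) ℤ) :=
  InM.ofSym SymT.zero

lemma InM.X_high {k : ℕ} {hk : k + 1 ≤ n} {i : Fin n} (hi : k ≤ (i : ℕ)) :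
    InM hk (MvPolynomial.X i) := by
  rcases eq_or_lt_of_le hi with h | h
  · refine ⟨-Polynomial.X, fun j => ?_, ?_⟩
    · rw [Polynomial.coeff_neg, Polynomial.coeff_X]
      split
      · exact SymT.neg (fun σ _ => by simp)
      · exact SymT.neg SymT.zero
    · have : i = ⟨k, hk⟩ := Fin.val_injective h.symm
      rw [this]; simp
  · exact InM.ofSym (sym_X h)

lemma InM.sum {k : ℕ} {hk : k + 1 ≤ n} {ι : Type*} {s : Finset ι}
    {f : ι → MvPolynomial (Fin n) ℤ} (h : ∀ i ∈ s, InM hk (f i)) :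
    InM hk (∑ i ∈ s, f i) := by
  classical
  induction s using Finset.induction with
  | empty => simpa using InM.zero
  | insert _ _ hx ih =>
    rw [Finset.sum_insert hx]
    exact (h _ (Finset.mem_insert_self _ _)).add (ih fun i hi => h i (Finset.mem_insert_of_mem hi))


variable {n : ℕ}


/-- restriction of a permutation fixing `≥ m` to `Fin m` -/
noncomputable def permRestrict {m : ℕ} (hm : m ≤ n) (σ : Equiv.Perm (Fin n))
    (hσ : ∀ i : Fin n, m ≤ (i : ℕ) → σ i = i) : Equiv.Perm (Fin m) := by
  refine Equiv.ofBijective (fun i => ⟨(σ (Fin.castLE hm i) : Fin n), ?_⟩) ?_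
  · by_contra h
    push_neg at h
    have h1 : σ (σ (Fin.castLE hm i)) = σ (Fin.castLE hm i) := hσ _ h
    have := σ.injective h1
    have h2 : ((Fin.castLE hm i : Fin n) : ℕ) < m := i.2
    rw [this] at h
    omega
  · apply Finite.injective_iff_bijective.mp
    intro a b hab
    simp only [Fin.mk.injEq] at hab
    have := σ.injective (Fin.val_injective (by exact_mod_cast hab))
    exact Fin.castLE_injective hm this

lemma permRestrict_apply {m : ℕ} (hm : m ≤ n) (σ : Equiv.Perm (Fin n))
    (hσ : ∀ i : Fin n, m ≤ (i : ℕ) → σ i = i) (i : Fin m) :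
    (Fin.castLE hm (permRestrict hm σ hσ i) : Fin n) = σ (Fin.castLE hm i) := by
  apply Fin.val_injective
  simp [permRestrict, Equiv.ofBijective]

/-- `Q m = ∏_{i<m} (T + xᵢ)` -/
noncomputable def Q {m : ℕ} (hm : m ≤ n) : Polynomial (MvPolynomial (Fin n) ℤ) :=
  ∏ i : Fin m, (Polynomial.X + Polynomial.C (MvPolynomial.X (Fin.castLE hm i)))

lemma Q_monic {m : ℕ} (hm : m ≤ n) : (Q hm).Monic :=
  monic_prod_of_monic _ _ fun i _ => monic_X_add_C _

lemma Q_natDegree {m : ℕ} (hm : m ≤ n) : (Q hm).natDegree = m := by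
  rw [Q, natDegree_prod]
  · simp
  · intro i _
    exact (monic_X_add_C _).ne_zero

lemma Q_map_rename {m : ℕ} (hm : m ≤ n) (σ : Equiv.Perm (Fin n))
    (hσ : ∀ i : Fin n, m ≤ (i : ℕ) → σ i = i) :
    (Q hm).map (rename (R := ℤ) σ).toRingHom = Q hm := by
  rw [Q, Polynomial.map_prod]
  simp only [Polynomial.map_add, Polynomial.map_X, Polynomial.map_C, AlgHom.toRingHom_eq_coe,
    RingHom.coe_coe, rename_X]
  rw [← Equiv.prod_comp (permRestrict hm σ hσ)
    (fun i => Polynomial.X + Polynomial.C (MvPolynomial.X (Fin.castLE hm i)))]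
  apply Finset.prod_congr rfl
  intro i _
  rw [permRestrict_apply]

lemma Q_coeff_sym {m : ℕ} (hm : m ≤ n) (j : ℕ) : SymT n m ((Q hm).coeff j) := by
  intro σ hσ
  have := Q_map_rename hm σ hσ
  conv_rhs => rw [← this]
  rw [Polynomial.coeff_map]
  rfl

lemma Q_succ {m : ℕ} (hm : m + 1 ≤ n) :
    Q hm = Q (Nat.le_of_succ_le hm) * (Polynomial.X + Polynomial.C (MvPolynomial.X ⟨m, hm⟩)) := by
  rw [Q, Fin.prod_univ_castSucc]
  congr 1

lemma Q_eval_root {m : ℕ} (hm : m + 1 ≤ n) :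
    (Q hm).eval (-MvPolynomial.X ⟨m, hm⟩) = 0 := by
  rw [Q, Polynomial.eval_prod]
  apply Finset.prod_eq_zero (Finset.mem_univ (Fin.last m))
  simp [Fin.last]


variable {n : ℕ}


/-- Step independence: the powers `1, x_k, …, x_k^k` are linearly independent over `Λ_{k+1}`. -/
lemma step_indep {k : ℕ} (hk : k + 1 ≤ n) (lam : Fin (k + 1) → MvPolynomial (Fin n) ℤ)
    (hlam : ∀ j, SymT n (k + 1) (lam j))
    (h : ∑ j : Fin (k + 1), lam j * MvPolynomial.X ⟨k, hk⟩ ^ (j : ℕ) = 0) :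
    ∀ j, lam j = 0 := by
  set f : Polynomial (MvPolynomial (Fin n) ℤ) :=
    ∑ j : Fin (k + 1), Polynomial.C (lam j) * Polynomial.X ^ (j : ℕ) with hf
  have hcoeff : ∀ j : Fin (k + 1), f.coeff (j : ℕ) = lam j := by
    intro j
    rw [hf, Polynomial.finset_sum_coeff]
    rw [Finset.sum_eq_single j]
    · simp
    · intro b _ hbj
      rw [Polynomial.coeff_C_mul, Polynomial.coeff_X_pow,
        if_neg (fun hc => hbj (Fin.val_injective hc).symm), mul_zero]
    · simp
  have heval : ∀ i : Fin (k + 1), f.eval (MvPolynomial.X (Fin.castLE hk i)) = 0 := by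
    intro i
    have hswap : ∀ m : Fin n, k + 1 ≤ (m : ℕ) →
        Equiv.swap (Fin.castLE hk i) ⟨k, hk⟩ m = m := by
      intro m hm
      apply Equiv.swap_apply_of_ne_of_ne
      · intro hc; rw [hc] at hm; simp at hm; omega
      · intro hc; rw [hc] at hm; simp at hm
    have := congrArg (rename (Equiv.swap (Fin.castLE hk i) ⟨k, hk⟩) :
      MvPolynomial (Fin n) ℤ →ₐ[ℤ] _) h
    rw [map_sum, map_zero] at this
    simp only [map_mul, map_pow, rename_X] at this
    rw [Equiv.swap_apply_right] at this
    simp only [hlam _ _ hswap] at this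
    rw [hf]
    rw [Polynomial.eval_finset_sum]
    simpa using this
  have hfz : f = 0 := by
    apply Polynomial.eq_zero_of_natDegree_lt_card_of_eval_eq_zero f
      (f := fun i : Fin (k + 1) => MvPolynomial.X (Fin.castLE hk i)) ?_ heval ?_
    · exact fun a b hab => Fin.castLE_injective hk (MvPolynomial.X_injective hab)
    · rw [Fintype.card_fin]
      calc f.natDegree ≤ k := by
            apply Polynomial.natDegree_sum_le_of_forall_le
            intro j _
            refine le_trans (Polynomial.natDegree_C_mul_le _ _) ?_
            rw [Polynomial.natDegree_X_pow]
            omega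
        _ < k + 1 := Nat.lt_succ_self k
  intro j
  rw [← hcoeff j, hfz, Polynomial.coeff_zero]


section QCoeffMem

lemma Qk_coeff_mem_aux {k : ℕ} (hk : k + 1 ≤ n) :
    ∀ d j, k + 1 ≤ j + d → InM hk ((Q (Nat.le_of_succ_le hk)).coeff j) := by
  intro d
  induction d with
  | zero =>
    intro j hj
    rw [Polynomial.coeff_eq_zero_of_natDegree_lt (by rw [Q_natDegree]; omega)]
    exact InM.zero
  | succ d ih =>
    intro j hj
    by_cases h : k + 1 ≤ j + d
    · exact ih j h
    · have hrel : (Q (Nat.le_of_succ_le hk)).coeff j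
          = (Q hk).coeff (j + 1)
            - (Q (Nat.le_of_succ_le hk)).coeff (j + 1) * MvPolynomial.X ⟨k, hk⟩ := by
        rw [Q_succ hk, mul_add, Polynomial.coeff_add, Polynomial.coeff_mul_X,
          Polynomial.coeff_mul_C]
        ring
      rw [hrel]
      exact (InM.ofSym (Q_coeff_sym hk (j + 1))).sub
        ((ih (j + 1) (by omega)).mul (InM.X_high (by simp)))

lemma Qk_coeff_mem {k : ℕ} (hk : k + 1 ≤ n) (j : ℕ) :
    InM hk ((Q (Nat.le_of_succ_le hk)).coeff j) :=
  Qk_coeff_mem_aux hk (k + 1) j (by omega)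

end QCoeffMem

section Phi

variable {k : ℕ}

/-- the splitting of `Fin n` into low (`< k`) and high indices -/
def eEquiv (hk : k ≤ n) : Fin k ⊕ Fin (n - k) ≃ Fin n :=
  finSumFinEquiv.trans (finCongr (Nat.add_sub_cancel' hk))

lemma eEquiv_inl (hk : k ≤ n) (i : Fin k) : eEquiv hk (Sum.inl i) = Fin.castLE hk i := by
  apply Fin.val_injective
  simp [eEquiv]

lemma eEquiv_inr_val (hk : k ≤ n) (j : Fin (n - k)) :
    ((eEquiv hk (Sum.inr j)) : ℕ) = k + (j : ℕ) := by
  simp [eEquiv]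

/-- the iso `ℤ[x₀,…,x_{n-1}] ≃ (ℤ[x_k,…,x_{n-1}])[x₀,…,x_{k-1}]` -/
noncomputable def Phi (hk : k ≤ n) :
    MvPolynomial (Fin n) ℤ ≃ₐ[ℤ] MvPolynomial (Fin k) (MvPolynomial (Fin (n - k)) ℤ) :=
  (renameEquiv ℤ (eEquiv hk).symm).trans (sumAlgEquiv ℤ (Fin k) (Fin (n - k)))

lemma Phi_X_inl (hk : k ≤ n) (i : Fin k) :
    Phi hk (MvPolynomial.X (eEquiv hk (Sum.inl i))) = MvPolynomial.X i := by
  simp only [Phi, AlgEquiv.trans_apply, renameEquiv_apply, rename_X, Equiv.symm_apply_apply]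
  exact sumAlgEquiv_X_inl ℤ (Fin k) (Fin (n - k)) i

lemma Phi_X_inr (hk : k ≤ n) (j : Fin (n - k)) :
    Phi hk (MvPolynomial.X (eEquiv hk (Sum.inr j))) = MvPolynomial.C (MvPolynomial.X j) := by
  simp only [Phi, AlgEquiv.trans_apply, renameEquiv_apply, rename_X, Equiv.symm_apply_apply]
  exact sumAlgEquiv_X_inr ℤ (Fin k) (Fin (n - k)) j

lemma sumAlgEquiv_rename_commute (π : Equiv.Perm (Fin k))
    (q : MvPolynomial (Fin k ⊕ Fin (n - k)) ℤ) :
    sumAlgEquiv ℤ (Fin k) (Fin (n - k)) (rename (Sum.map π id) q)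
      = rename π (sumAlgEquiv ℤ (Fin k) (Fin (n - k)) q) := by
  induction q using MvPolynomial.induction_on with
  | C r =>
    simp only [rename_C]
    have h1 : sumAlgEquiv ℤ (Fin k) (Fin (n - k)) (MvPolynomial.C r) =
        MvPolynomial.C (MvPolynomial.C r) := sumAlgEquiv_C_inl ℤ (Fin k) (Fin (n - k)) r
    rw [h1, rename_C]
  | add p q hp hq => simp only [map_add, hp, hq]
  | mul_X p s hp =>
    simp only [map_mul, hp]
    congr 1
    cases s with
    | inl i =>
      have h1 : sumAlgEquiv ℤ (Fin k) (Fin (n - k)) (MvPolynomial.X (Sum.inl i)) =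
          MvPolynomial.X i := sumAlgEquiv_X_inl ℤ (Fin k) (Fin (n - k)) i
      have h2 : sumAlgEquiv ℤ (Fin k) (Fin (n - k)) (MvPolynomial.X (Sum.inl (π i))) =
          MvPolynomial.X (π i) := sumAlgEquiv_X_inl ℤ (Fin k) (Fin (n - k)) (π i)
      rw [rename_X, Sum.map_inl, h1, h2, rename_X]
    | inr j =>
      have h1 : sumAlgEquiv ℤ (Fin k) (Fin (n - k)) (MvPolynomial.X (Sum.inr j)) =
          MvPolynomial.C (MvPolynomial.X j) := sumAlgEquiv_X_inr ℤ (Fin k) (Fin (n - k)) j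
      rw [rename_X, Sum.map_inr, id, h1, rename_C]

lemma Phi_symmetric (hk : k ≤ n) {p : MvPolynomial (Fin n) ℤ} (hp : SymT n k p) :
    MvPolynomial.IsSymmetric (Phi hk p) := by
  intro π
  set σ : Equiv.Perm (Fin n) := (eEquiv hk).permCongr (Equiv.sumCongr π (Equiv.refl _)) with hσdef
  have hfix : ∀ i : Fin n, k ≤ (i : ℕ) → σ i = i := by
    intro i hi
    obtain ⟨s, rfl⟩ := (eEquiv hk).surjective i
    cases s with
    | inl a =>
      rw [eEquiv_inl] at hi
      simp only [Fin.coe_castLE] at hi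
      omega
    | inr b =>
      rw [hσdef]
      simp [Equiv.permCongr_apply]
  have hcomm : rename π (Phi hk p) = Phi hk (rename σ p) := by
    rw [Phi, AlgEquiv.trans_apply, AlgEquiv.trans_apply, renameEquiv_apply, renameEquiv_apply,
      rename_rename, ← sumAlgEquiv_rename_commute, rename_rename]
    have hfun : (Sum.map (⇑π) id ∘ ⇑(eEquiv hk).symm) = (⇑(eEquiv hk).symm ∘ ⇑σ) := by
      funext x
      simp only [Function.comp_apply, hσdef, Equiv.permCongr_apply, Equiv.symm_apply_apply,
        Equiv.sumCongr_apply]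
      cases (eEquiv hk).symm x <;> rfl
    rw [hfun]
  rw [hcomm, hp σ hfix]

end Phi

section SpanStep

variable {k : ℕ}

lemma SymT.intCast (k : ℕ) (z : ℤ) : SymT n k (z : MvPolynomial (Fin n) ℤ) := by
  intro σ hσ; rw [map_intCast]

lemma Phi_symm_C_mem (hk : k + 1 ≤ n) (r' : MvPolynomial (Fin (n - k)) ℤ) :
    InM hk ((Phi (Nat.le_of_succ_le hk)).symm (MvPolynomial.C r')) := by
  induction r' using MvPolynomial.induction_on with
  | C z =>
    have h : (MvPolynomial.C (MvPolynomial.C z) :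
        MvPolynomial (Fin k) (MvPolynomial (Fin (n - k)) ℤ)) = ((z : ℤ) : _) := by
      push_cast
      rfl
    rw [h, map_intCast]
    exact InM.ofSym (SymT.intCast _ z)
  | add p q hp hq => rw [map_add, map_add]; exact hp.add hq
  | mul_X p j hp =>
    rw [map_mul, map_mul]
    refine hp.mul ?_
    have h1 : (Phi (Nat.le_of_succ_le hk)).symm (MvPolynomial.C (MvPolynomial.X j))
        = MvPolynomial.X (eEquiv (Nat.le_of_succ_le hk) (Sum.inr j)) := by
      rw [← Phi_X_inr (Nat.le_of_succ_le hk) j, AlgEquiv.symm_apply_apply]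
    rw [h1]
    exact InM.X_high (by rw [eEquiv_inr_val]; omega)

lemma Phi_symm_X (hk : k ≤ n) (i : Fin k) :
    (Phi hk).symm (MvPolynomial.X i) = MvPolynomial.X (Fin.castLE hk i) := by
  have := Phi_X_inl hk i
  rw [eEquiv_inl] at this
  rw [← this, AlgEquiv.symm_apply_apply]

lemma esymm_image_mem (hk : k + 1 ≤ n) (j : ℕ) (hj : j ≤ k) :
    InM hk ((Phi (Nat.le_of_succ_le hk)).symm
      (MvPolynomial.esymm (Fin k) (MvPolynomial (Fin (n - k)) ℤ) j)) := by
  have hv := MvPolynomial.prod_X_add_C_coeff (MvPolynomial (Fin (n - k)) ℤ) (Fin k)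
    (k - j) (by rw [Fintype.card_fin]; omega)
  rw [Fintype.card_fin, show k - (k - j) = j by omega] at hv
  rw [← hv]
  have hmap : (∏ i : Fin k,
        (Polynomial.X + Polynomial.C (MvPolynomial.X (R := MvPolynomial (Fin (n - k)) ℤ) i))).map
      ((Phi (Nat.le_of_succ_le hk)).symm : MvPolynomial (Fin k) (MvPolynomial (Fin (n - k)) ℤ)
        ≃ₐ[ℤ] MvPolynomial (Fin n) ℤ).toAlgHom.toRingHom = Q (Nat.le_of_succ_le hk) := by
    rw [Polynomial.map_prod, Q]
    apply Finset.prod_congr rfl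
    intro i _
    rw [Polynomial.map_add, Polynomial.map_X, Polynomial.map_C]
    congr 1
    congr 1
    exact Phi_symm_X (Nat.le_of_succ_le hk) i
  have hc : (Phi (Nat.le_of_succ_le hk)).symm
      ((∏ i : Fin k, (Polynomial.X
        + Polynomial.C (MvPolynomial.X (R := MvPolynomial (Fin (n - k)) ℤ) i))).coeff (k - j))
      = (Q (Nat.le_of_succ_le hk)).coeff (k - j) := by
    rw [← hmap, Polynomial.coeff_map]
    rfl
  rw [hc]
  exact Qk_coeff_mem hk (k - j)

lemma InM_of_symk (hk : k + 1 ≤ n) {p : MvPolynomial (Fin n) ℤ} (hp : SymT n k p) :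
    InM hk p := by
  have kn : k ≤ n := Nat.le_of_succ_le hk
  have hq0 : MvPolynomial.IsSymmetric (Phi kn p) := Phi_symmetric kn hp
  obtain ⟨Qp, hQp⟩ := esymmAlgHom_surjective (σ := Fin k)
    (MvPolynomial (Fin (n - k)) ℤ) (n := k) (by rw [Fintype.card_fin]) ⟨Phi kn p, hq0⟩
  have hval : aeval (fun i : Fin k =>
      MvPolynomial.esymm (Fin k) (MvPolynomial (Fin (n - k)) ℤ) ((i : ℕ) + 1)) Qp = Phi kn p := by
    have := congrArg Subtype.val hQp
    rw [esymmAlgHom_apply] at this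
    exact this
  have hp2 : p = (Phi kn).symm (aeval (fun i : Fin k =>
      MvPolynomial.esymm (Fin k) (MvPolynomial (Fin (n - k)) ℤ) ((i : ℕ) + 1)) Qp) := by
    rw [hval, AlgEquiv.symm_apply_apply]
  rw [hp2]
  clear hp2 hval hQp hq0 hp
  induction Qp using MvPolynomial.induction_on with
  | C r' =>
    rw [MvPolynomial.aeval_C]
    exact Phi_symm_C_mem hk r'
  | add p q hp hq => rw [map_add, map_add]; exact hp.add hq
  | mul_X p i hp =>
    rw [map_mul, map_mul, MvPolynomial.aeval_X]
    exact hp.mul (esymm_image_mem hk ((i : ℕ) + 1) (by omega))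

/-- Step spanning: any `Λ_k`-element is a combination of `1, x_k, …, x_k^k`
with `Λ_{k+1}` coefficients. -/
lemma step_span (hk : k + 1 ≤ n) {p : MvPolynomial (Fin n) ℤ} (hp : SymT n k p) :
    ∃ μ : Fin (k + 1) → MvPolynomial (Fin n) ℤ, (∀ j, SymT n (k + 1) (μ j)) ∧
      p = ∑ j : Fin (k + 1), μ j * MvPolynomial.X ⟨k, hk⟩ ^ (j : ℕ) := by
  obtain ⟨q, hq, rfl⟩ := InM_of_symk hk hp
  set r := q %ₘ Q hk with hr
  have hQne1 : Q hk ≠ 1 := by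
    intro h1
    have := congrArg Polynomial.natDegree h1
    rw [Q_natDegree] at this
    simp at this
  have hrdeg : r.natDegree < k + 1 := by
    have := Polynomial.natDegree_modByMonic_lt q (Q_monic hk) hQne1
    rwa [Q_natDegree] at this
  have hrsym : ∀ j, SymT n (k + 1) (r.coeff j) := by
    intro j σ hσ
    have hqmap : q.map (rename (R := ℤ) σ).toRingHom = q := by
      refine Polynomial.ext fun m => ?_
      rw [Polynomial.coeff_map]
      exact hq m σ hσ
    have hrmap : r.map (rename (R := ℤ) σ).toRingHom = r := by
      rw [hr, Polynomial.map_modByMonic _ (Q_monic hk), hqmap, Q_map_rename hk σ hσ]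
    conv_rhs => rw [← hrmap]
    rw [Polynomial.coeff_map]
    rfl
  have heval : q.eval (-(MvPolynomial.X ⟨k, hk⟩)) = r.eval (-(MvPolynomial.X ⟨k, hk⟩)) := by
    conv_lhs => rw [← Polynomial.modByMonic_add_div q (Q hk)]
    rw [Polynomial.eval_add, Polynomial.eval_mul, Q_eval_root hk, zero_mul, add_zero]
  refine ⟨fun j => (-1) ^ (j : ℕ) * r.coeff (j : ℕ), fun j σ hσ => ?_, ?_⟩
  · rw [map_mul, hrsym _ σ hσ]
    congr 1
    rw [map_pow, map_neg, map_one]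
  · rw [heval, Polynomial.eval_eq_sum_range' hrdeg, ← Fin.sum_univ_eq_sum_range]
    apply Finset.sum_congr rfl
    intro j _
    rw [neg_pow]
    ring

end SpanStep

section Main

lemma SymT.pow {k m : ℕ} {p : MvPolynomial (Fin n) ℤ} (hp : SymT n k p) : SymT n k (p ^ m) := by
  intro σ hσ; rw [map_pow, hp σ hσ]

/-- the staircase index type -/
abbrev Ik (k : ℕ) := ∀ i : Fin k, Fin ((i : ℕ) + 1)

/-- the staircase monomials -/
noncomputable def Ffam {k : ℕ} (hk : k ≤ n) (d : Ik k) : MvPolynomial (Fin n) ℤ :=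
  ∏ i : Fin k, MvPolynomial.X (Fin.castLE hk i) ^ ((d i : ℕ))

lemma Ffam_snoc {k : ℕ} (hk1 : k + 1 ≤ n) (d' : Ik k) (j : Fin (k + 1)) :
    Ffam hk1 (Fin.snoc d' j) = Ffam (Nat.le_of_succ_le hk1) d'
      * MvPolynomial.X ⟨k, hk1⟩ ^ (j : ℕ) := by
  rw [Ffam, Fin.prod_univ_castSucc]
  congr 1
  · rw [Ffam]
    apply Finset.prod_congr rfl
    intro i _
    rw [Fin.snoc_castSucc]
    congr 1
  · rw [Fin.snoc_last]
    rfl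

lemma main_claim : ∀ k : ℕ, ∀ hk : k ≤ n,
    (∀ g : Ik k → MvPolynomial (Fin n) ℤ, (∀ d, SymT n k (g d)) →
      ∑ d : Ik k, g d * Ffam hk d = 0 → ∀ d, g d = 0)
    ∧ (∀ p : MvPolynomial (Fin n) ℤ, ∃ g : Ik k → MvPolynomial (Fin n) ℤ,
      (∀ d, SymT n k (g d)) ∧ p = ∑ d : Ik k, g d * Ffam hk d) := by
  intro k
  induction k with
  | zero =>
    intro hk
    constructor
    · intro g hsym hsum d
      have h1 : Ffam hk d = 1 := by rw [Ffam]; simp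
      have h2 : ∑ d : Ik 0, g d * Ffam hk d = g d * Ffam hk d := by
        apply Fintype.sum_eq_single
        intro d' hd'
        exact absurd (Subsingleton.elim d' d) hd'
      rw [h2, h1, mul_one] at hsum
      exact hsum
    · intro p
      refine ⟨fun _ => p, fun d => sym_zero' (n := n) p, ?_⟩
      have h2 : ∑ d : Ik 0, p * Ffam hk d = p * Ffam hk (fun i => i.elim0) := by
        apply Fintype.sum_eq_single
        intro d' hd'
        exact absurd (Subsingleton.elim d' _) hd'
      rw [h2, show Ffam hk (fun i => i.elim0) = 1 by rw [Ffam]; simp, mul_one]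
  | succ k ih =>
    intro hk1
    have hk : k ≤ n := Nat.le_of_succ_le hk1
    obtain ⟨ih_ind, ih_span⟩ := ih hk
    have hsum_reindex : ∀ t : Ik (k + 1) → MvPolynomial (Fin n) ℤ,
        ∑ d : Ik (k + 1), t d = ∑ d' : Ik k, ∑ j : Fin (k + 1), t (Fin.snoc d' j) := by
      intro t
      have hbij : Function.Bijective
          (fun p : (Ik k) × Fin (k + 1) => (Fin.snoc p.1 p.2 : Ik (k + 1))) := by
        refine Function.bijective_iff_has_inverse.mpr
          ⟨fun d => (Fin.init d, d (Fin.last k)), ?_, ?_⟩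
        · rintro ⟨d', j⟩
          simp
        · intro d
          exact Fin.snoc_init_self d
      rw [← Function.Bijective.sum_comp hbij t, Fintype.sum_prod_type]
    constructor
    · intro g hsym hsum d
      set h : Ik k → MvPolynomial (Fin n) ℤ := fun d' =>
        ∑ j : Fin (k + 1), g (Fin.snoc d' j) * MvPolynomial.X ⟨k, hk1⟩ ^ (j : ℕ) with hh
      have hsum2 : ∑ d' : Ik k, h d' * Ffam hk d' = 0 := by
        rw [← hsum, hsum_reindex (fun d => g d * Ffam hk1 d)]
        apply Finset.sum_congr rfl
        intro d' _
        rw [hh, Finset.sum_mul]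
        apply Finset.sum_congr rfl
        intro j _
        rw [Ffam_snoc]
        ring
      have hzero : ∀ d', h d' = 0 := by
        apply ih_ind h
        · intro d'
          apply SymT.sum
          intro j _
          exact ((hsym _).mono (Nat.le_succ k)).mul ((sym_X (le_refl k)).pow)
        · exact hsum2
      have hstep : ∀ d' j, g (Fin.snoc d' j) = 0 := by
        intro d' j
        exact step_indep hk1 (fun j => g (Fin.snoc d' j))
          (fun j => hsym _) (hzero d') j
      have := hstep (Fin.init d) (d (Fin.last k))
      rwa [Fin.snoc_init_self d] at this
    · intro p
      obtain ⟨g, hgsym, rfl⟩ := ih_span p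
      choose μ hμsym hμeq using fun d' => step_span hk1 (hgsym d')
      refine ⟨fun d => μ (Fin.init d) (d (Fin.last k)), fun d => hμsym _ _, ?_⟩
      rw [hsum_reindex (fun d => μ (Fin.init d) (d (Fin.last k)) * Ffam hk1 d)]
      apply Finset.sum_congr rfl
      intro d' _
      rw [hμeq d', Finset.sum_mul]
      apply Finset.sum_congr rfl
      intro j _
      rw [Fin.init_snoc, Fin.snoc_last, Ffam_snoc]
      ring

end Main

section Endgame

lemma symT_top_iff (p : MvPolynomial (Fin n) ℤ) :
    SymT n n p ↔ MvPolynomial.IsSymmetric p := by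
  constructor
  · intro h e
    exact h e (fun i hi => absurd i.2 (by omega))
  · intro h σ _
    exact h σ

lemma smul_eq_coe_mul (x : MvPolynomial.symmetricSubalgebra (Fin n) ℤ)
    (p : MvPolynomial (Fin n) ℤ) : x • p = (x : MvPolynomial (Fin n) ℤ) * p := rfl

theorem main_basis_exists :
    Nonempty (Module.Basis (Ik n) (MvPolynomial.symmetricSubalgebra (Fin n) ℤ)
      (MvPolynomial (Fin n) ℤ)) := by
  obtain ⟨hind, hspan⟩ := main_claim n (le_refl n)
  have li : LinearIndependent (MvPolynomial.symmetricSubalgebra (Fin n) ℤ)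
      (Ffam (le_refl n)) := by
    rw [Fintype.linearIndependent_iff]
    intro g hg d
    have h0 : ∑ d : Ik n, (g d : MvPolynomial (Fin n) ℤ) * Ffam (le_refl n) d = 0 := by
      rw [← hg]
      apply Finset.sum_congr rfl
      intro d _
      rw [smul_eq_coe_mul]
    have := hind (fun d => (g d : MvPolynomial (Fin n) ℤ))
      (fun d => (symT_top_iff _).mpr ((mem_symmetricSubalgebra _).mp (g d).2)) h0 d
    exact Subtype.ext this
  have sp : ⊤ ≤ Submodule.span (MvPolynomial.symmetricSubalgebra (Fin n) ℤ)
      (Set.range (Ffam (le_refl n))) := by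
    intro p _
    obtain ⟨g, hgsym, rfl⟩ := hspan p
    apply Submodule.sum_mem
    intro d _
    have hmem : g d ∈ MvPolynomial.symmetricSubalgebra (Fin n) ℤ :=
      (mem_symmetricSubalgebra _).mpr ((symT_top_iff _).mp (hgsym d))
    have : g d * Ffam (le_refl n) d
        = (⟨g d, hmem⟩ : MvPolynomial.symmetricSubalgebra (Fin n) ℤ) • Ffam (le_refl n) d := rfl
    rw [this]
    exact Submodule.smul_mem _ _ (Submodule.subset_span ⟨d, rfl⟩)
  exact ⟨Module.Basis.mk li sp⟩

end Endgame

end Stmt5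

/-- `ℤ[x₁,…,xₙ]` is a free module of rank `n!` over the subring
`Λₙ = ℤ[x₁,…,xₙ]^{Sₙ}` of symmetric polynomials. -/
theorem stmt_5 (n : ℕ) :
    Module.Free (MvPolynomial.symmetricSubalgebra (Fin n) ℤ) (MvPolynomial (Fin n) ℤ) ∧
    Module.rank (MvPolynomial.symmetricSubalgebra (Fin n) ℤ) (MvPolynomial (Fin n) ℤ) =
      (Nat.factorial n : Cardinal) := by
  obtain ⟨b⟩ := Stmt5.main_basis_exists (n := n)
  haveI : Nontrivial (MvPolynomial.symmetricSubalgebra (Fin n) ℤ) := by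
    refine nontrivial_of_ne 0 1 ?_
    intro h
    have := congrArg (Subtype.val) h
    simp only [ZeroMemClass.coe_zero, OneMemClass.coe_one] at this
    exact zero_ne_one this
  constructor
  · exact Module.Free.of_basis b
  · rw [rank_eq_card_basis b]
    norm_cast
    rw [Fintype.card_pi]
    simp only [Fintype.card_fin]
    rw [Fin.prod_univ_eq_prod_range (fun i => i + 1) n]
    exact Finset.prod_range_add_one_eq_factorial n
end

section
/- The standard elementary monomials {ε_ℓ := ε_{ℓ₁}^{(1)} ε_{ℓ₂}^{(2)} ⋯ ε_{ℓ_{n−1}}^{(n−1)} : ℓ ∈ Sq(n)} form a basis of ℤ[x₁,…,xₙ] as a module over the ring of symmetric polynomials Λₙ, where ε_r^{(a)} is the r-th elementary symmetric polynomial in x₁,…,x_a. -/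
set_option synthInstance.maxHeartbeats 1000000
set_option maxHeartbeats 1600000


open MvPolynomial

/-- The `k`-th elementary symmetric polynomial in the variables indexed by the finite set `s`. -/
noncomputable def esymmOn (R : Type*) [CommSemiring R] {σ : Type*} [DecidableEq σ]
    (s : Finset σ) (k : ℕ) : MvPolynomial σ R :=
  ∑ t ∈ Finset.powersetCard k s, ∏ i ∈ t, X i

/-- The standard elementary monomial `ε_ℓ = ε_{ℓ₁}^{(1)} ⋯ ε_{ℓ_{n−1}}^{(n−1)}` for
`ℓ ∈ Sq(n)`, where `ε_r^{(a)}` is the `r`-th elementary symmetric polynomial in `x₁,…,x_a`.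
Here the index `k : Fin (n-1)` corresponds to `ν = k+1`, and `ℓ k : Fin (k+2)` encodes
`0 ≤ ℓ_ν ≤ ν`. -/
noncomputable def stdElemMonomial (n : ℕ) (ℓ : (k : Fin (n - 1)) → Fin ((k : ℕ) + 2)) :
    MvPolynomial (Fin n) ℤ :=
  ∏ k : Fin (n - 1),
    esymmOn ℤ (Finset.univ.filter fun j : Fin n => (j : ℕ) ≤ (k : ℕ)) ((ℓ k : ℕ))


lemma rename_esymmOn (R : Type*) [CommSemiring R] {σ : Type*} [DecidableEq σ]
    (s : Finset σ) (k : ℕ) (g : Equiv.Perm σ) (hs : s.image g = s) :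
    rename g (esymmOn R s k) = esymmOn R s k := by
  simp only [esymmOn, map_sum, map_prod, rename_X]
  refine Finset.sum_nbij' (fun t => t.image g) (fun t => t.image g.symm) ?_ ?_ ?_ ?_ ?_
  · intro t ht
    rw [Finset.mem_powersetCard] at ht ⊢
    constructor
    · intro x hx
      rw [Finset.mem_image] at hx
      obtain ⟨y, hy, rfl⟩ := hx
      rw [← hs]; exact Finset.mem_image_of_mem _ (ht.1 hy)
    · rw [Finset.card_image_of_injective _ g.injective, ht.2]
  · intro t ht
    rw [Finset.mem_powersetCard] at ht ⊢
    constructor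
    · intro x hx
      rw [Finset.mem_image] at hx
      obtain ⟨y, hy, rfl⟩ := hx
      have := ht.1 hy
      rw [← hs, Finset.mem_image] at this
      obtain ⟨z, hz, hzy⟩ := this
      rwa [← hzy, Equiv.symm_apply_apply]
    · rw [Finset.card_image_of_injective _ g.symm.injective, ht.2]
  · intro t _; simp [Finset.image_image]
  · intro t _; simp [Finset.image_image]
  · intro t _
    exact (Finset.prod_image fun x _ y _ h => g.injective h).symm

lemma esymmOn_insert (R : Type*) [CommSemiring R] {σ : Type*} [DecidableEq σ]
    {s : Finset σ} {x : σ} (hx : x ∉ s) (k : ℕ) :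
    esymmOn R (insert x s) (k+1) = esymmOn R s (k+1) + X x * esymmOn R s k := by
  rw [esymmOn, Finset.powersetCard_succ_insert hx]
  rw [Finset.sum_union]
  · congr 1
    simp only [esymmOn]; rw [Finset.sum_image ?inj]
    case inj =>
      intro t ht u hu h
      rw [Finset.mem_coe, Finset.mem_powersetCard] at ht hu
      have hxt : x ∉ t := fun hh => hx (ht.1 hh)
      have hxu : x ∉ u := fun hh => hx (hu.1 hh)
      have := congrArg (fun v => Finset.erase v x) h
      simpa [Finset.erase_insert hxt, Finset.erase_insert hxu] using this
    simp only [esymmOn, Finset.mul_sum]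
    refine Finset.sum_congr rfl fun t ht => ?_
    rw [Finset.mem_powersetCard] at ht
    rw [Finset.prod_insert (fun hh => hx (ht.1 hh))]
  · rw [Finset.disjoint_left]
    intro t ht ht'
    rw [Finset.mem_powersetCard] at ht
    rw [Finset.mem_image] at ht'
    obtain ⟨u, hu, rfl⟩ := ht'
    exact hx (ht.1 (Finset.mem_insert_self x u))

namespace Aux
variable (n : ℕ)

abbrev A := MvPolynomial (Fin n) ℤ

/-- ε_r^{(m)} : the r-th elementary symmetric polynomial in the first m variables. -/
noncomputable def es (m r : ℕ) : A n :=
  esymmOn ℤ (Finset.univ.filter fun j : Fin n => (j : ℕ) < m) r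

/-- Subalgebra of polynomials symmetric in the first m variables. -/
noncomputable def BS (m : ℕ) : Subalgebra ℤ (A n) where
  carrier := {p | ∀ g : Equiv.Perm (Fin n), (∀ j : Fin n, m ≤ (j : ℕ) → g j = j) →
    rename g p = p}
  add_mem' := fun hp hq g hg => by rw [map_add, hp g hg, hq g hg]
  mul_mem' := fun hp hq g hg => by rw [map_mul, hp g hg, hq g hg]
  one_mem' := fun g hg => by rw [map_one]
  zero_mem' := fun g hg => by rw [map_zero]
  algebraMap_mem' := fun r g hg => by simp [algebraMap_eq]

lemma mem_BS {m : ℕ} {p : A n} : p ∈ BS n m ↔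
    ∀ g : Equiv.Perm (Fin n), (∀ j : Fin n, m ≤ (j : ℕ) → g j = j) → rename g p = p :=
  Iff.rfl

lemma BS_anti {m m' : ℕ} (h : m ≤ m') : BS n m' ≤ BS n m := by
  intro p hp g hg
  exact hp g fun j hj => hg j (h.trans hj)

lemma es_zero (m : ℕ) : es n m 0 = 1 := by simp [es, esymmOn]

lemma card_filter_lt (m : ℕ) (h : m ≤ n) :
    (Finset.univ.filter fun j : Fin n => (j : ℕ) < m).card = m := by
  have him : (Finset.univ.filter fun j : Fin n => (j : ℕ) < m).image Fin.val
      = Finset.range m := by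
    ext a; simp [Fin.exists_iff]; omega
  have := Finset.card_image_of_injective (Finset.univ.filter fun j : Fin n => (j : ℕ) < m)
    (Fin.val_injective)
  rw [him, Finset.card_range] at this; omega

lemma es_eq_zero {m r : ℕ} (h : m ≤ n) (hr : m < r) : es n m r = 0 := by
  rw [es, esymmOn, Finset.powersetCard_eq_empty.2]
  · simp
  · rw [card_filter_lt n m h]; exact hr

/-- a permutation fixing all indices `≥ m` stabilizes `{j | j < m}`. -/
lemma image_filter_lt (m : ℕ) (g : Equiv.Perm (Fin n))
    (hg : ∀ j : Fin n, m ≤ (j : ℕ) → g j = j) :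
    (Finset.univ.filter fun j : Fin n => (j : ℕ) < m).image g
      = Finset.univ.filter fun j : Fin n => (j : ℕ) < m := by
  apply Finset.eq_of_subset_of_card_le
  · intro x hx
    rw [Finset.mem_image] at hx
    obtain ⟨y, hy, rfl⟩ := hx
    rw [Finset.mem_filter] at hy ⊢
    refine ⟨Finset.mem_univ _, ?_⟩
    by_contra hge
    push_neg at hge
    have := hg (g y) hge
    have := g.injective this
    rw [this] at hge
    exact absurd hy.2 (by omega)
  · rw [Finset.card_image_of_injective _ g.injective]

lemma es_mem_BS (m r : ℕ) : es n m r ∈ BS n m := by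
  intro g hg
  exact rename_esymmOn ℤ _ r g (image_filter_lt n m g hg)

lemma X_mem_BS {m : ℕ} {j : Fin n} (hj : m ≤ (j : ℕ)) : X j ∈ BS n m := by
  intro g hg
  rw [rename_X, hg j hj]

lemma pascal {m : ℕ} (hm : m < n) (r : ℕ) :
    es n (m+1) (r+1) = es n m (r+1) + X ⟨m, hm⟩ * es n m r := by
  have hins : (Finset.univ.filter fun j : Fin n => (j : ℕ) < m + 1)
      = insert ⟨m, hm⟩ (Finset.univ.filter fun j : Fin n => (j : ℕ) < m) := by
    ext j
    simp only [Finset.mem_filter, Finset.mem_univ, true_and, Finset.mem_insert]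
    rw [Fin.ext_iff]
    simp only [Fin.val_mk]
    omega
  rw [es, hins, esymmOn_insert]
  · rfl
  · simp


open MvPolynomial
variable {n : ℕ}

lemma es_coe_mem {m : ℕ} (p : A n) (hp : p ∈ BS n m)
    {S : Set (A n)} : p ∈ (Algebra.adjoin (BS n m) S : Subalgebra (BS n m) (A n)) := by
  have : p = algebraMap (BS n m) (A n) ⟨p, hp⟩ := rfl
  rw [this]
  exact Subalgebra.algebraMap_mem _ _

lemma es_mem_adjoin {m : ℕ} (hm : m < n) (r : ℕ) :
    es n m r ∈ Algebra.adjoin (BS n (m+1)) {(X ⟨m, hm⟩ : A n)} := by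
  induction r with
  | zero => rw [es_zero]; exact one_mem _
  | succ r ih =>
    have hp := pascal n hm r
    have : es n m (r+1) = es n (m+1) (r+1) - X ⟨m, hm⟩ * es n m r := by
      rw [hp]; ring
    rw [this]
    refine sub_mem ?_ (mul_mem (Algebra.subset_adjoin rfl) ih)
    exact es_coe_mem _ (es_mem_BS n (m+1) (r+1))

lemma X_mul_mem_span {m : ℕ} (hm : m < n) {v : A n}
    (hv : v ∈ Submodule.span (BS n (m+1)) (Set.range fun r : Fin (m+1) => es n m r)) :
    X ⟨m, hm⟩ * v ∈ Submodule.span (BS n (m+1)) (Set.range fun r : Fin (m+1) => es n m r) := by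
  induction hv using Submodule.span_induction with
  | mem x hx =>
    obtain ⟨r, rfl⟩ := hx
    have hp := pascal n hm r
    have : X ⟨m, hm⟩ * es n m r = es n (m+1) (r+1) - es n m (r+1) := by rw [hp]; ring
    rw [this]
    refine sub_mem ?_ ?_
    · have h1 : es n (m+1) (r+1) = (⟨es n (m+1) (r+1), es_mem_BS n (m+1) (r+1)⟩ : BS n (m+1))
          • es n m 0 := by
        rw [es_zero]
        rw [Algebra.smul_def, mul_one]; rfl
      rw [h1]
      exact Submodule.smul_mem _ _ (Submodule.subset_span ⟨⟨0, by omega⟩, rfl⟩)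
    · rcases lt_or_eq_of_le (Nat.lt_succ_iff.mp r.2) with h | h
      · exact Submodule.subset_span ⟨⟨r+1, by omega⟩, rfl⟩
      · rw [h, es_eq_zero n (by omega) (by omega)]
        exact zero_mem _
  | zero => rw [mul_zero]; exact zero_mem _
  | add x y _ _ hx hy => rw [mul_add]; exact add_mem hx hy
  | smul c x _ hx => rw [mul_smul_comm]; exact Submodule.smul_mem _ _ hx

lemma mem_span_es {m : ℕ} (hm : m < n) {p : A n}
    (hp : p ∈ Algebra.adjoin (BS n (m+1)) {(X ⟨m, hm⟩ : A n)}) :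
    p ∈ Submodule.span (BS n (m+1)) (Set.range fun r : Fin (m+1) => es n m r) := by
  rw [Algebra.adjoin_singleton_eq_range_aeval] at hp
  obtain ⟨q, rfl⟩ := hp
  show (Polynomial.aeval (X (⟨m, hm⟩ : Fin n))) q ∈ _
  rw [Polynomial.aeval_eq_sum_range]
  refine Submodule.sum_mem _ fun i _ => Submodule.smul_mem _ _ ?_
  clear! q
  induction i with
  | zero =>
    rw [pow_zero, ← es_zero n m]
    exact Submodule.subset_span ⟨⟨0, by omega⟩, rfl⟩
  | succ i ih => rw [pow_succ, mul_comm]; exact X_mul_mem_span hm ih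



open MvPolynomial
variable (n m : ℕ)

abbrev σ' := {j : Fin n // (j : ℕ) < m}
abbrev τ' := {j : Fin n // ¬ (j : ℕ) < m}
abbrev Rm := MvPolynomial (τ' n m) ℤ

noncomputable def φ : A n →ₐ[ℤ] MvPolynomial (σ' n m) (Rm n m) :=
  aeval fun j : Fin n =>
    if h : (j : ℕ) < m then X ⟨j, h⟩ else C (X ⟨j, h⟩)

noncomputable def evv : MvPolynomial (σ' n m) (Rm n m) →+* A n :=
  eval₂Hom (eval₂Hom (C : ℤ →+* A n) (fun t : τ' n m => X t.1)) (fun s : σ' n m => X s.1)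

lemma evv_phi (p : A n) : evv n m (φ n m p) = p := by
  have : (evv n m).comp (φ n m).toRingHom = RingHom.id (A n) := by
    apply MvPolynomial.ringHom_ext
    · intro r
      simp [φ, evv, algebraMap_eq]
    · intro j
      by_cases h : (j : ℕ) < m <;> simp [φ, evv, h]
  exact congrFun (congrArg (fun f => f.toFun) this) p

lemma phi_rename (e : Equiv.Perm (σ' n m)) (p : A n) :
    φ n m (rename (e.extendDomain (Equiv.refl (σ' n m))) p) = rename e (φ n m p) := by
  induction p using MvPolynomial.induction_on with
  | C r => simp [φ, algebraMap_eq]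
  | add p q hp hq => simp only [map_add, hp, hq]
  | mul_X p j hp =>
    rw [map_mul, rename_X, map_mul, hp, map_mul]
    congr 1
    by_cases h : (j : ℕ) < m
    · have hed := Equiv.Perm.extendDomain_apply_subtype e (Equiv.refl (σ' n m)) (b := j) h
      rw [hed]
      simp only [φ, aeval_X, Equiv.refl_apply, Equiv.refl_symm]
      rw [dif_pos h, dif_pos (e ⟨j, h⟩).2]
      simp [rename_X]
    · have hed := Equiv.Perm.extendDomain_apply_not_subtype e (Equiv.refl (σ' n m)) (b := j) h
      rw [hed]
      simp only [φ, aeval_X]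
      rw [dif_neg h, map_mul, rename_C]

lemma phi_symmetric {p : A n} (hp : p ∈ BS n m) :
    φ n m p ∈ symmetricSubalgebra (σ' n m) (Rm n m) := by
  intro e
  rw [← phi_rename n m e p, hp _ ?_]
  intro j hj
  exact Equiv.Perm.extendDomain_apply_not_subtype _ _ (by omega)

lemma evv_esymm (r : ℕ) : evv n m (esymm (σ' n m) (Rm n m) r) = es n m r := by
  rw [MvPolynomial.esymm, map_sum, es, esymmOn]
  refine Finset.sum_bij (fun t _ => t.map (Function.Embedding.subtype _)) ?_ ?_ ?_ ?_
  · intro t ht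
    rw [Finset.mem_powersetCard] at ht ⊢
    constructor
    · intro x hx
      rw [Finset.mem_map] at hx
      obtain ⟨y, _, rfl⟩ := hx
      simp [y.2]
    · rw [Finset.card_map, ht.2]
  · intro t _ u _ h
    exact Finset.map_injective _ h
  · intro t' ht'
    rw [Finset.mem_powersetCard] at ht'
    refine ⟨t'.subtype _, ?_, ?_⟩
    · rw [Finset.mem_powersetCard]
      refine ⟨Finset.subset_univ _, ?_⟩
      rw [Finset.card_subtype, ← ht'.2]
      congr 1
      apply Finset.filter_true_of_mem
      intro x hx
      have := ht'.1 hx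
      rw [Finset.mem_filter] at this
      exact this.2
    · simp only [Finset.subtype_map]
      apply Finset.filter_true_of_mem
      intro x hx
      have := ht'.1 hx
      rw [Finset.mem_filter] at this
      exact this.2
  · intro t _
    rw [map_prod, Finset.prod_map]
    refine Finset.prod_congr rfl fun x _ => ?_
    simp [evv]

/-- The relative fundamental theorem of symmetric polynomials. -/
lemma relFT {p : A n} (hp : p ∈ BS n m) :
    p ∈ Algebra.adjoin ℤ
      (Set.range (es n m) ∪ {x | ∃ j : Fin n, m ≤ (j : ℕ) ∧ x = X j}) := by
  set D := Algebra.adjoin ℤ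
      (Set.range (es n m) ∪ {x | ∃ j : Fin n, m ≤ (j : ℕ) ∧ x = X j}) with hD
  obtain ⟨q, hq⟩ := esymmAlgHom_surjective (R := Rm n m) (σ := σ' n m)
    (n := Fintype.card (σ' n m)) le_rfl ⟨φ n m p, phi_symmetric n m hp⟩
  have hq' : φ n m p = aeval (fun i : Fin (Fintype.card (σ' n m)) =>
      esymm (σ' n m) (Rm n m) (i + 1)) q := by
    rw [← esymmAlgHom_apply, hq]
  have hXD : ∀ t : τ' n m, (X t.1 : A n) ∈ D :=
    fun t => Algebra.subset_adjoin (Or.inr ⟨t.1, by omega, rfl⟩)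
  have hinner : ∀ r' : Rm n m, evv n m (MvPolynomial.C r') ∈ D := by
    intro r'
    have : evv n m (MvPolynomial.C r') =
        eval₂ (C : ℤ →+* A n) (fun t : τ' n m => X t.1) r' := by
      rw [evv, eval₂Hom_C]
      rfl
    rw [this]
    refine eval₂_mem (fun i _ => ?_) hXD
    rw [← algebraMap_eq]
    exact Subalgebra.algebraMap_mem _ _
  have hrw : p = evv n m (φ n m p) := (evv_phi n m p).symm
  rw [hrw, hq', aeval_def, eval₂_comp_left (evv n m)]
  refine eval₂_mem (fun i _ => ?_) ?_
  · exact hinner _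
  · intro i
    show evv n m (esymm _ _ _) ∈ D
    rw [evv_esymm]
    exact Algebra.subset_adjoin (Or.inl ⟨(i : ℕ) + 1, rfl⟩)



open MvPolynomial
variable {n : ℕ}

/-- products of es from level m up -/
def prodSet (n m : ℕ) : Set (A n) :=
  {q | ∃ f : ℕ → ℕ, q = ∏ a ∈ Finset.Ico m n, es n a (f a)}

lemma adjoin_le {m : ℕ} (hm : m < n) :
    Algebra.adjoin ℤ (Set.range (es n m) ∪ {x | ∃ j : Fin n, m ≤ (j : ℕ) ∧ x = X j})
      ≤ (Algebra.adjoin (BS n (m+1)) {(X ⟨m, hm⟩ : A n)}).restrictScalars ℤ := by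
  rw [Algebra.adjoin_le_iff]
  rintro x (⟨r, rfl⟩ | ⟨j, hj, rfl⟩)
  · exact es_mem_adjoin hm r
  · rcases eq_or_lt_of_le hj with h | h
    · have : j = ⟨m, hm⟩ := by ext; simp only [Fin.val_mk]; omega
      rw [this]
      exact Algebra.subset_adjoin rfl
    · exact es_coe_mem _ (X_mem_BS n (Nat.succ_le_of_lt h))

lemma mul_es_mem {m : ℕ} (hm : m < n) (r : ℕ) {q : A n}
    (hq : q ∈ Submodule.span (symmetricSubalgebra (Fin n) ℤ) (prodSet n (m+1))) :
    q * es n m r ∈ Submodule.span (symmetricSubalgebra (Fin n) ℤ) (prodSet n m) := by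
  induction hq using Submodule.span_induction with
  | mem x hx =>
    obtain ⟨f, rfl⟩ := hx
    refine Submodule.subset_span ⟨Function.update f m r, ?_⟩
    rw [Finset.prod_eq_prod_Ico_succ_bot hm]
    rw [Function.update_self]
    rw [mul_comm]
    congr 1
    refine Finset.prod_congr rfl fun a ha => ?_
    rw [Finset.mem_Ico] at ha
    rw [Function.update_of_ne (by omega)]
  | zero => rw [zero_mul]; exact zero_mem _
  | add x y _ _ hx hy => rw [add_mul]; exact add_mem hx hy
  | smul c x _ hx => rw [smul_mul_assoc]; exact Submodule.smul_mem _ _ hx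

lemma span_aux (t : ℕ) : ∀ m, n ≤ m + t → ∀ p ∈ BS n m,
    p ∈ Submodule.span (symmetricSubalgebra (Fin n) ℤ) (prodSet n m) := by
  induction t with
  | zero =>
    intro m hm p hp
    have hsym : p ∈ symmetricSubalgebra (Fin n) ℤ := by
      intro e
      exact hp e fun j hj => absurd hj (by have := j.2; omega)
    have h1 : (1 : A n) ∈ prodSet n m := ⟨fun _ => 0, by
      rw [Finset.Ico_eq_empty (by omega), Finset.prod_empty]⟩
    have : p = (⟨p, hsym⟩ : symmetricSubalgebra (Fin n) ℤ) • (1 : A n) := by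
      rw [Algebra.smul_def, mul_one]; rfl
    rw [this]
    exact Submodule.smul_mem _ _ (Submodule.subset_span h1)
  | succ t ih =>
    intro m hm p hp
    by_cases hnm : n ≤ m + t
    · exact ih m hnm p hp
    have hmn : m < n := by omega
    have h1 := relFT n m hp
    have h2 := adjoin_le hmn h1
    rw [Subalgebra.mem_restrictScalars] at h2
    have h3 := mem_span_es hmn h2
    rw [Submodule.mem_span_range_iff_exists_fun] at h3
    obtain ⟨c, hc⟩ := h3
    rw [← hc]
    refine Submodule.sum_mem _ fun r _ => ?_
    have : (c r) • es n m (r : ℕ) = ((c r : A n)) * es n m (r : ℕ) := by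
      rw [Algebra.smul_def]; rfl
    rw [this]
    exact mul_es_mem hmn _ (ih (m+1) (by omega) _ (c r).2)

lemma mem_span_prodSet_one (p : A n) :
    p ∈ Submodule.span (symmetricSubalgebra (Fin n) ℤ) (prodSet n 1) := by
  refine span_aux n 1 (by omega) p ?_
  intro g hg
  have hfix : ∀ j, g j = j := by
    intro j
    rcases Nat.eq_zero_or_pos (j : ℕ) with h | h
    · by_contra hne
      have h1 : 1 ≤ ((g j) : ℕ) := by
        by_contra hh
        exact hne (Fin.ext (by omega))
      exact hne (g.injective (hg (g j) h1))
    · exact hg j h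
  have hco : ⇑g = id := funext hfix
  rw [hco, rename_id, AlgHom.id_apply]

lemma es_eq_esymmOn_le (k r : ℕ) :
    esymmOn ℤ (Finset.univ.filter fun j : Fin n => (j : ℕ) ≤ k) r = es n (k+1) r := by
  rw [es]
  congr 1
  ext j
  simp [Nat.lt_succ_iff]

lemma prod_trans (f : ℕ → ℕ) (hf : ∀ a ∈ Finset.Ico 1 n, f a ≤ a) :
    ∏ a ∈ Finset.Ico 1 n, es n a (f a)
      = stdElemMonomial n (fun k => ⟨f ((k : ℕ)+1), by
          have hk := k.2
          exact Nat.lt_succ_of_le (hf _ (by rw [Finset.mem_Ico]; omega))⟩) := by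
  rw [stdElemMonomial]
  rw [Finset.prod_Ico_eq_prod_range]
  rw [← Fin.prod_univ_eq_prod_range (fun i => es n (1+i) (f (1+i))) (n-1)]
  refine Finset.prod_congr rfl fun k _ => ?_
  rw [es_eq_esymmOn_le]
  simp only [Fin.val_mk]
  rw [Nat.add_comm 1 (k : ℕ)]

theorem span_top :
    Submodule.span (symmetricSubalgebra (Fin n) ℤ) (Set.range (stdElemMonomial n)) = ⊤ := by
  rw [eq_top_iff]
  intro p _
  refine Submodule.span_le.2 ?_ (mem_span_prodSet_one p)
  rintro x ⟨f, rfl⟩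
  by_cases hf : ∀ a ∈ Finset.Ico 1 n, f a ≤ a
  · exact Submodule.subset_span ⟨_, (prod_trans f hf).symm⟩
  · push_neg at hf
    obtain ⟨a, ha, hfa⟩ := hf
    have h0 : ∏ a ∈ Finset.Ico 1 n, es n a (f a) = 0 :=
      Finset.prod_eq_zero ha (es_eq_zero n (le_of_lt (Finset.mem_Ico.1 ha).2) hfa)
    rw [h0]
    exact zero_mem _



open MvPolynomial
variable (n : ℕ)

lemma prod_fin_add_two (N : ℕ) : (∏ k : Fin N, ((k : ℕ) + 2)) = (N+1).factorial := by
  induction N with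
  | zero => simp
  | succ N ih =>
    rw [Fin.prod_univ_castSucc]
    simp only [Fin.coe_castSucc, Fin.val_last]
    rw [ih, Nat.factorial_succ (N+1)]
    ring

lemma card_index : Fintype.card ((k : Fin (n-1)) → Fin ((k : ℕ)+2)) = n.factorial := by
  rw [Fintype.card_pi]
  simp only [Fintype.card_fin]
  rw [prod_fin_add_two]
  cases n with
  | zero => rfl
  | succ n => simp

abbrev L := FractionRing (A n)

lemma map_nzd (e : A n ≃+* A n) :
    Submonoid.map e.toMonoidHom (nonZeroDivisors (A n)) = nonZeroDivisors (A n) := by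
  ext x
  simp only [Submonoid.mem_map]
  constructor
  · rintro ⟨y, hy, rfl⟩
    rw [mem_nonZeroDivisors_iff_ne_zero] at hy ⊢
    intro h0
    exact hy (e.injective (by simpa using h0))
  · intro hx
    refine ⟨e.symm x, ?_, e.apply_symm_apply x⟩
    rw [mem_nonZeroDivisors_iff_ne_zero] at hx ⊢
    intro h0
    exact hx (by simpa using congrArg e h0)

noncomputable def homLg (g : Equiv.Perm (Fin n)) : L n ≃+* L n :=
  IsLocalization.ringEquivOfRingEquiv (M := nonZeroDivisors (A n))
    (T := nonZeroDivisors (A n)) (S := L n) (Q := L n)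
    ((renameEquiv ℤ g).toRingEquiv) (map_nzd n _)

lemma homLg_algebraMap (g : Equiv.Perm (Fin n)) (a : A n) :
    homLg n g (algebraMap (A n) (L n) a) = algebraMap (A n) (L n) (rename g a) :=
  IsLocalization.ringEquivOfRingEquiv_eq _ _

noncomputable def homL : Equiv.Perm (Fin n) →* (L n ≃+* L n) where
  toFun := homLg n
  map_one' := by
    have : (homLg n 1).toRingHom = RingHom.id (L n) := by
      apply IsLocalization.ringHom_ext (nonZeroDivisors (A n))
      refine RingHom.ext fun a => ?_
      simp only [RingHom.coe_comp, Function.comp_apply, RingHom.id_apply,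
        RingEquiv.toRingHom_eq_coe, RingEquiv.coe_toRingHom]
      rw [homLg_algebraMap]
      congr 1
      rw [show ⇑(1 : Equiv.Perm (Fin n)) = id from rfl, rename_id, AlgHom.id_apply]
    exact RingEquiv.ext fun z => RingHom.congr_fun this z
  map_mul' := fun g h => by
    have : (homLg n (g * h)).toRingHom
        = ((homLg n g).toRingHom).comp (homLg n h).toRingHom := by
      apply IsLocalization.ringHom_ext (nonZeroDivisors (A n))
      refine RingHom.ext fun a => ?_
      simp only [RingHom.coe_comp, Function.comp_apply, RingEquiv.toRingHom_eq_coe,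
        RingEquiv.coe_toRingHom]
      rw [homLg_algebraMap, homLg_algebraMap, homLg_algebraMap, rename_rename]
      congr 1
    exact RingEquiv.ext fun z => RingHom.congr_fun this z

noncomputable instance actL : MulSemiringAction (Equiv.Perm (Fin n)) (L n) :=
  MulSemiringAction.compHom _ (homL n)

lemma smul_L (g : Equiv.Perm (Fin n)) (z : L n) : g • z = homLg n g z := rfl

lemma mem_fixed_iff (x : L n) :
    x ∈ FixedPoints.subfield (Equiv.Perm (Fin n)) (L n)
      ↔ ∀ g : Equiv.Perm (Fin n), g • x = x := by
  exact Iff.rfl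

lemma fixed_of_symm {q : A n} (hq : q ∈ symmetricSubalgebra (Fin n) ℤ) :
    algebraMap (A n) (L n) q ∈ FixedPoints.subfield (Equiv.Perm (Fin n)) (L n) := by
  rw [mem_fixed_iff]
  intro g
  rw [smul_L, homLg_algebraMap, hq g]

instance : FaithfulSMul (Equiv.Perm (Fin n)) (L n) := by
  constructor
  intro g₁ g₂ h
  apply Equiv.ext
  intro i
  have := h (algebraMap (A n) (L n) (X i))
  rw [smul_L, smul_L, homLg_algebraMap, homLg_algebraMap, rename_X, rename_X] at this
  exact X_injective (IsFractionRing.injective (A n) (L n) this)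



open MvPolynomial
variable (n : ℕ)

noncomputable def wfam : ((k : Fin (n-1)) → Fin ((k : ℕ)+2)) → L n :=
  fun ℓ => algebraMap (A n) (L n) (stdElemMonomial n ℓ)

noncomputable abbrev F := FixedPoints.subfield (Equiv.Perm (Fin n)) (L n)

lemma algebraMap_mem_span_F {q : A n}
    (hq : q ∈ Submodule.span (symmetricSubalgebra (Fin n) ℤ)
      (Set.range (stdElemMonomial n))) :
    algebraMap (A n) (L n) q ∈ Submodule.span (F n) (Set.range (wfam n)) := by
  induction hq using Submodule.span_induction with
  | mem x hx =>
    obtain ⟨ℓ, rfl⟩ := hx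
    exact Submodule.subset_span ⟨ℓ, rfl⟩
  | zero => rw [map_zero]; exact zero_mem _
  | add x y _ _ hx hy => rw [map_add]; exact add_mem hx hy
  | smul c x _ hx =>
    have h1 : (c • x : A n) = (c : A n) * x := by rw [Algebra.smul_def]; rfl
    have hc : algebraMap (A n) (L n) (c : A n) ∈ F n := fixed_of_symm n c.2
    have h2 : algebraMap (A n) (L n) (c • x)
        = (⟨algebraMap (A n) (L n) (c : A n), hc⟩ : F n) • algebraMap (A n) (L n) x := by
      rw [h1, map_mul]
      rfl
    rw [h2]
    exact Submodule.smul_mem _ _ hx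

lemma top_le_span_F : ⊤ ≤ Submodule.span (F n) (Set.range (wfam n)) := by
  intro z _
  obtain ⟨⟨a, s⟩, rfl⟩ := IsLocalization.mk'_surjective (nonZeroDivisors (A n)) z
  dsimp only
  set M' : A n := ∏ g ∈ (Finset.univ : Finset (Equiv.Perm (Fin n))).erase 1,
    rename g (s : A n) with hM'
  set N : A n := ∏ g : Equiv.Perm (Fin n), rename g (s : A n) with hN
  have hsplit : N = (s : A n) * M' := by
    rw [hN, ← Finset.mul_prod_erase Finset.univ _ (Finset.mem_univ 1), ← hM']
    congr 1
    rw [show ⇑(1 : Equiv.Perm (Fin n)) = id from rfl, rename_id, AlgHom.id_apply]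
  have hNsymm : N ∈ symmetricSubalgebra (Fin n) ℤ := by
    intro g
    rw [hN, map_prod]
    have h1 : ∀ g' : Equiv.Perm (Fin n),
        rename g (rename g' (s : A n)) = rename (g * g') (s : A n) := by
      intro g'
      rw [rename_rename]
      rfl
    simp_rw [h1]
    exact Equiv.prod_comp (Equiv.mulLeft g) (fun y => rename y (s : A n))
  have hfac0 : ∀ g : Equiv.Perm (Fin n), rename g (s : A n) ≠ 0 := by
    intro g h0
    have : (s : A n) = 0 := rename_injective _ g.injective (by rw [h0, map_zero])
    exact nonZeroDivisors.ne_zero s.2 this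
  have hM'0 : M' ≠ 0 := Finset.prod_ne_zero_iff.2 fun g _ => hfac0 g
  have hs0 : (s : A n) ≠ 0 := nonZeroDivisors.ne_zero s.2
  have inj := IsFractionRing.injective (A n) (L n)
  have hs0' : algebraMap (A n) (L n) (s : A n) ≠ 0 := fun h =>
    hs0 (inj (by rw [h, map_zero]))
  have hM'0' : algebraMap (A n) (L n) M' ≠ 0 := fun h =>
    hM'0 (inj (by rw [h, map_zero]))
  have hN0' : algebraMap (A n) (L n) N ≠ 0 := by
    rw [hsplit, map_mul]
    exact mul_ne_zero hs0' hM'0'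
  set NF : F n := ⟨algebraMap (A n) (L n) N, fixed_of_symm n hNsymm⟩ with hNF
  have hz : IsLocalization.mk' (L n) a s
      = NF⁻¹ • (algebraMap (A n) (L n) (a * M')) := by
    rw [IsFractionRing.mk'_eq_div]
    have hsm : NF⁻¹ • (algebraMap (A n) (L n) (a * M'))
        = (algebraMap (A n) (L n) N)⁻¹ * algebraMap (A n) (L n) (a * M') := rfl
    rw [hsm, hsplit]
    rw [map_mul, map_mul]
    field_simp
  rw [hz]
  refine Submodule.smul_mem _ _ (algebraMap_mem_span_F n ?_)
  rw [span_top]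
  trivial

theorem indep : LinearIndependent (symmetricSubalgebra (Fin n) ℤ) (stdElemMonomial n) := by
  have hcard : Fintype.card ((k : Fin (n-1)) → Fin ((k : ℕ)+2))
      = Module.finrank (F n) (L n) := by
    rw [card_index, FixedPoints.finrank_eq_card, Fintype.card_perm, Fintype.card_fin]
  have hw : LinearIndependent (F n) (wfam n) :=
    linearIndependent_of_top_le_span_of_card_eq_finrank (top_le_span_F n) hcard
  rw [Fintype.linearIndependent_iff] at hw ⊢
  intro c hc
  have inj := IsFractionRing.injective (A n) (L n)
  have key := hw (fun ℓ => ⟨algebraMap (A n) (L n) ((c ℓ : A n)), fixed_of_symm n (c ℓ).2⟩) ?_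
  · intro i
    have h0 := key i
    have h1 : algebraMap (A n) (L n) ((c i : A n)) = 0 := congrArg Subtype.val h0
    have h2 : (c i : A n) = 0 := inj (by rw [h1, map_zero])
    exact Subtype.ext h2
  · have hterm : ∀ ℓ, (⟨algebraMap (A n) (L n) ((c ℓ : A n)), fixed_of_symm n (c ℓ).2⟩ : F n)
        • wfam n ℓ = algebraMap (A n) (L n) (c ℓ • stdElemMonomial n ℓ) := by
      intro ℓ
      show algebraMap (A n) (L n) ((c ℓ : A n)) * wfam n ℓ
        = algebraMap (A n) (L n) ((c ℓ : A n) * stdElemMonomial n ℓ)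
      rw [map_mul]
      rfl
    calc (∑ ℓ, (⟨algebraMap (A n) (L n) ((c ℓ : A n)), fixed_of_symm n (c ℓ).2⟩ : F n)
          • wfam n ℓ)
        = ∑ ℓ, algebraMap (A n) (L n) (c ℓ • stdElemMonomial n ℓ) :=
          Finset.sum_congr rfl fun ℓ _ => hterm ℓ
      _ = algebraMap (A n) (L n) (∑ ℓ, c ℓ • stdElemMonomial n ℓ) := (map_sum _ _ _).symm
      _ = 0 := by rw [hc, map_zero]


end Aux



/-- the standard elementary monomials `{ε_ℓ : ℓ ∈ Sq(n)}` form a basis of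
`ℤ[x₁,…,xₙ]` as a module over the ring `Λₙ` of symmetric polynomials. -/
theorem stmt_6 (n : ℕ) :
    LinearIndependent (MvPolynomial.symmetricSubalgebra (Fin n) ℤ) (stdElemMonomial n) ∧
    Submodule.span (MvPolynomial.symmetricSubalgebra (Fin n) ℤ)
      (Set.range (stdElemMonomial n)) = ⊤ :=
  ⟨Aux.indep n, Aux.span_top⟩
end
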